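/- arXiv:1806.10077 — 3 statements merged into one kernel-verified Lean document; each statement's English description precedes it below -/
import Mathlib

section
/- Let i, j be drawn uniformly at random from all ordered pairs of distinct indices in {1,...,n}. Define Δ = E_{i≠j}[H_i ∇f_j(x*)], where H_i is the Hessian of f_i at the minimizer x* of F = (1/n)∑f_i. If each ‖H_i‖ ≤ L and ‖∇f_i(x*)‖ ≤ G, and ∇F(x*) = 0, then ‖Δ‖ ≤ LG/(n-1). -/
/-!
Because `∑ⱼ gⱼ = 0`, each off-diagonal row sum `∑_{j ≠ i} Hᵢ gⱼ` collapses to `-Hᵢ gᵢ`.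
So the `n (n - 1)` terms of the average contribute only `n` terms of norm at most `L G`,
and dividing by `n (n - 1)` gives `L G / (n - 1)`.
-/

open Finset

theorem Finset.sum_univ_sdiff_singleton_eq_neg {ι M : Type*} [Fintype ι] [DecidableEq ι]
    [AddCommGroup M] {g : ι → M} (hg : ∑ i, g i = 0) (i : ι) :
    ∑ j ∈ univ \ {i}, g j = -g i := by
  rw [sum_sdiff_eq_sub (subset_univ _), hg, sum_singleton, zero_sub]

theorem sum_sum_sdiff_apply_eq_neg_sum_apply {ι M N F : Type*} [Fintype ι] [DecidableEq ι]
    [AddCommGroup M] [AddCommGroup N] [FunLike F M N] [AddMonoidHomClass F M N]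
    (H : ι → F) {g : ι → M} (hg : ∑ i, g i = 0) :
    ∑ i, ∑ j ∈ univ \ {i}, H i (g j) = -∑ i, H i (g i) := by
  simp only [← map_sum, sum_univ_sdiff_singleton_eq_neg hg, map_neg, sum_neg_distrib]

theorem norm_sum_apply_le_card_mul {ι 𝕜 E F : Type*} [Fintype ι] [NontriviallyNormedField 𝕜]
    [SeminormedAddCommGroup E] [SeminormedAddCommGroup F] [NormedSpace 𝕜 E] [NormedSpace 𝕜 F]
    {H : ι → E →L[𝕜] F} {g : ι → E} {L G : ℝ} (hH : ∀ i, ‖H i‖ ≤ L) (hG : ∀ i, ‖g i‖ ≤ G) :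
    ‖∑ i, H i (g i)‖ ≤ Fintype.card ι * (L * G) :=
  calc ‖∑ i, H i (g i)‖ ≤ ∑ _i : ι, L * G :=
        norm_sum_le_of_le _ fun i _ => (H i).le_of_opNorm_le_of_le (hH i) (hG i)
    _ = Fintype.card ι * (L * G) := by rw [sum_const, card_univ, nsmul_eq_mul]

/-- If `Δ = E_{i≠j}[H_i ∇f_j(x*)]`, each `‖H_i‖ ≤ L`,
`‖∇f_i(x*)‖ ≤ G`, and `∑ ∇f_i(x*) = 0`, then `‖Δ‖ ≤ L G/(n-1)`. -/
theorem stmt0 {d n : ℕ} (hn : 2 ≤ n) (L G : ℝ)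
    (H : Fin n → EuclideanSpace ℝ (Fin d) →L[ℝ] EuclideanSpace ℝ (Fin d))
    (g : Fin n → EuclideanSpace ℝ (Fin d))
    (hH : ∀ i, ‖H i‖ ≤ L) (hG : ∀ i, ‖g i‖ ≤ G)
    (hsum : ∑ i, g i = 0)
    (Δ : EuclideanSpace ℝ (Fin d))
    (hΔ : Δ = ((n : ℝ) * ((n : ℝ) - 1))⁻¹ • ∑ i, ∑ j ∈ univ \ {i}, H i (g j)) :
    ‖Δ‖ ≤ L * G / ((n : ℝ) - 1) := by
  have hn1 : (0 : ℝ) < (n : ℝ) - 1 := by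
    have : (2 : ℝ) ≤ n := by exact_mod_cast hn
    linarith
  have hbound : ‖∑ i, H i (g i)‖ ≤ n * (L * G) := by
    simpa using norm_sum_apply_le_card_mul hH hG
  rw [hΔ, sum_sum_sdiff_apply_eq_neg_sum_apply H hsum, norm_smul, norm_neg, norm_inv,
    Real.norm_of_nonneg (by positivity)]
  calc ((n : ℝ) * ((n : ℝ) - 1))⁻¹ * ‖∑ i, H i (g i)‖
      ≤ ((n : ℝ) * ((n : ℝ) - 1))⁻¹ * (n * (L * G)) := by gcongr
    _ = L * G / ((n : ℝ) - 1) := by field_simp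
end

section
/- Suppose each f_i has L-Lipschitz gradient, the deviation bound ‖∇F(x) - ∇f_i(x)‖ ≤ δ holds for all x and i, and the step size satisfies γ ≤ 1/(nL). Then along one random-shuffle epoch x_k = x_{k-1} - γ∇f_{σ(k)}(x_{k-1}), for every index id and every 0 ≤ i ≤ n: ‖∇f_{id}(x_i) - ∇f_{id}(x_0)‖ ≤ [∑_{j=0}^{i-1}(1+Lγ)^j]·Lγ·(‖∇F(x_0)‖ + δ) ≤ 3nLγ(‖∇F(x_0)‖ + δ). -/
open Finset

/-- along one random-shuffle epoch with `γ ≤ 1/(nL)` and deviation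
bound `‖∇F(x) - ∇f_i(x)‖ ≤ δ`, the gradient drift satisfies
`‖∇f_id(x_i) - ∇f_id(x_0)‖ ≤ [∑_{j<i}(1+Lγ)^j] Lγ (‖∇F(x_0)‖+δ) ≤ 3nLγ(‖∇F(x_0)‖+δ)`. -/
theorem stmt14 {d n : ℕ} (hn : 0 < n) (γ L δ : ℝ) (hγ0 : 0 < γ) (hL : 0 < L) (hδ : 0 ≤ δ)
    (hγ : γ ≤ 1 / ((n : ℝ) * L))
    (g : Fin n → EuclideanSpace ℝ (Fin d) → EuclideanSpace ℝ (Fin d))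
    (gF : EuclideanSpace ℝ (Fin d) → EuclideanSpace ℝ (Fin d))
    (havg : ∀ x, gF x = (n : ℝ)⁻¹ • ∑ i, g i x)
    (hLip : ∀ i x y, ‖g i x - g i y‖ ≤ L * ‖x - y‖)
    (hdev : ∀ i x, ‖gF x - g i x‖ ≤ δ)
    (σ : Equiv.Perm (Fin n))
    (x : ℕ → EuclideanSpace ℝ (Fin d))
    (hupd : ∀ k : Fin n, x ((k : ℕ) + 1) = x k - γ • g (σ k) (x k)) :
    ∀ (id : Fin n) (i : ℕ), i ≤ n →
      ‖g id (x i) - g id (x 0)‖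
          ≤ (∑ j ∈ Finset.range i, (1 + L * γ) ^ j) * (L * γ) * (‖gF (x 0)‖ + δ)
      ∧ (∑ j ∈ Finset.range i, (1 + L * γ) ^ j) * (L * γ) * (‖gF (x 0)‖ + δ)
          ≤ 3 * (n : ℝ) * L * γ * (‖gF (x 0)‖ + δ) := by
  have hn' : (0:ℝ) < (n:ℝ) := by exact_mod_cast hn
  set C := ‖gF (x 0)‖ + δ with hCdef
  have hC0 : 0 ≤ C := by positivity
  have hLγ0 : (0:ℝ) < L * γ := by positivity
  have hnLγ : (n : ℝ) * (L * γ) ≤ 1 := by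
    rw [le_div_iff₀ (by positivity)] at hγ
    nlinarith
  -- key induction: bound on ‖x i - x 0‖
  have key : ∀ i, i ≤ n → ‖x i - x 0‖ ≤
      (∑ j ∈ Finset.range i, (1 + L * γ) ^ j) * γ * C := by
    intro i
    induction i with
    | zero => intro _; simp
    | succ k ih =>
      intro hk
      have hkn : k < n := hk
      have ihk := ih (le_of_lt hkn)
      have hx : x (k + 1) = x k - γ • g (σ ⟨k, hkn⟩) (x k) := hupd ⟨k, hkn⟩
      set v := g (σ ⟨k, hkn⟩) (x k) with hv
      have hnorm_v : ‖v‖ ≤ L * ‖x k - x 0‖ + C := by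
        have h1 : ‖v - g (σ ⟨k, hkn⟩) (x 0)‖ ≤ L * ‖x k - x 0‖ := hLip _ _ _
        have h2 : ‖gF (x 0) - g (σ ⟨k, hkn⟩) (x 0)‖ ≤ δ := hdev _ _
        have := norm_sub_le (v - g (σ ⟨k, hkn⟩) (x 0)) (gF (x 0) - g (σ ⟨k, hkn⟩) (x 0))
        have heq : v - g (σ ⟨k, hkn⟩) (x 0) - (gF (x 0) - g (σ ⟨k, hkn⟩) (x 0))
            = v - gF (x 0) := by abel
        rw [heq] at this
        have h3 : ‖v‖ ≤ ‖v - gF (x 0)‖ + ‖gF (x 0)‖ := by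
          simpa using norm_add_le (v - gF (x 0)) (gF (x 0))
        simp only [hCdef]
        linarith
      have hstep : ‖x (k + 1) - x 0‖ ≤ ‖x k - x 0‖ + γ * ‖v‖ := by
        rw [hx]
        have heq : x k - γ • v - x 0 = (x k - x 0) - γ • v := by abel
        rw [heq]
        have := norm_sub_le (x k - x 0) (γ • v)
        rw [norm_smul, Real.norm_eq_abs, abs_of_pos hγ0] at this
        exact this
      have hsum : (∑ j ∈ Finset.range (k + 1), (1 + L * γ) ^ j)
          = (1 + L * γ) * (∑ j ∈ Finset.range k, (1 + L * γ) ^ j) + 1 :=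
        geom_sum_succ
      calc ‖x (k + 1) - x 0‖ ≤ ‖x k - x 0‖ + γ * ‖v‖ := hstep
        _ ≤ ‖x k - x 0‖ + γ * (L * ‖x k - x 0‖ + C) := by nlinarith [norm_nonneg v]
        _ = (1 + L * γ) * ‖x k - x 0‖ + γ * C := by ring
        _ ≤ (1 + L * γ) * ((∑ j ∈ Finset.range k, (1 + L * γ) ^ j) * γ * C) + γ * C := by
            nlinarith
        _ = (∑ j ∈ Finset.range (k + 1), (1 + L * γ) ^ j) * γ * C := by
            rw [hsum]; ring
  -- bound each power by 3
  have hpow3 : ∀ j, j ≤ n → (1 + L * γ) ^ j ≤ 3 := by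
    intro j hj
    have h1 : (1 + L * γ) ^ j ≤ Real.exp (L * γ) ^ j := by
      apply pow_le_pow_left₀ (by positivity)
      linarith [Real.add_one_le_exp (L * γ)]
    have h2 : Real.exp (L * γ) ^ j = Real.exp ((j : ℝ) * (L * γ)) := by
      rw [← Real.exp_nat_mul]
    have h3 : (j : ℝ) * (L * γ) ≤ 1 := by
      have : (j : ℝ) ≤ (n : ℝ) := by exact_mod_cast hj
      nlinarith
    have h4 : Real.exp ((j : ℝ) * (L * γ)) ≤ Real.exp 1 := Real.exp_le_exp.mpr h3
    have h5 : Real.exp 1 ≤ 3 := by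
      linarith [Real.exp_one_lt_d9]
    calc (1 + L * γ) ^ j ≤ Real.exp (L * γ) ^ j := h1
      _ = Real.exp ((j : ℝ) * (L * γ)) := h2
      _ ≤ 3 := le_trans h4 h5
  intro id i hi
  have hsum3 : (∑ j ∈ Finset.range i, (1 + L * γ) ^ j) ≤ 3 * (n : ℝ) := by
    calc (∑ j ∈ Finset.range i, (1 + L * γ) ^ j) ≤ ∑ j ∈ Finset.range i, (3:ℝ) := by
          apply Finset.sum_le_sum
          intro j hjmem
          exact hpow3 j (le_trans (le_of_lt (Finset.mem_range.mp hjmem)) hi)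
      _ = 3 * (i : ℝ) := by simp [mul_comm]
      _ ≤ 3 * (n : ℝ) := by
          have : (i : ℝ) ≤ (n : ℝ) := by exact_mod_cast hi
          linarith
  constructor
  · calc ‖g id (x i) - g id (x 0)‖ ≤ L * ‖x i - x 0‖ := hLip _ _ _
      _ ≤ L * ((∑ j ∈ Finset.range i, (1 + L * γ) ^ j) * γ * C) := by
          have := key i hi
          nlinarith
      _ = (∑ j ∈ Finset.range i, (1 + L * γ) ^ j) * (L * γ) * C := by ring
  · have : (∑ j ∈ Finset.range i, (1 + L * γ) ^ j) * (L * γ) ≤ 3 * (n : ℝ) * (L * γ) := by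
      nlinarith
    calc (∑ j ∈ Finset.range i, (1 + L * γ) ^ j) * (L * γ) * C
        ≤ 3 * (n : ℝ) * (L * γ) * C := by nlinarith
      _ = 3 * (n : ℝ) * L * γ * C := by ring
end

section
/- Suppose F = (1/n)∑f_i satisfies the Polyak-Łojasiewicz condition with parameter μ, F and each f_i have L-Lipschitz gradients, and gradients are bounded by G. Then one full random-shuffle epoch with step size γ satisfies F(x_n) - F* ≤ (1 - 2nμγ + 2L²n²γ²)(F(x_0) - F*) - γ⟨∇F(x_0), R⟩ + Lγ²‖R‖², where R = ∑_{i=1}^n[∇f_{σ(i)}(x_{i-1}) - ∇f_{σ(i)}(x_0)] and x_n = x_0 - γ(n∇F(x_0) + R). -/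
open Finset RealInnerProductSpace

/-!
The descent lemma for an `L`-smooth function, applied at `x₀` with the step
`x_n - x₀ = -γ (n ∇F(x₀) + R)`, bounds `F(x_n)` by
`F(x₀) - γ n ‖∇F(x₀)‖² - γ ⟪∇F(x₀), R⟫ + (L/2) γ² ‖n ∇F(x₀) + R‖²`.
Splitting `‖n ∇F(x₀) + R‖² ≤ 2 n² ‖∇F(x₀)‖² + 2 ‖R‖²`, the PL inequality turns the first-order
term into `-2 n μ γ (F(x₀) - F*)`, while the upper bound `‖∇F‖² ≤ 2 L (F - F*)`, which is the
descent lemma applied at the step `-∇F / L`, controls the second-order term.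
-/

section Smooth

variable {E : Type*} [NormedAddCommGroup E] [InnerProductSpace ℝ E] [CompleteSpace E]
  {F : E → ℝ} {gF : E → E}

theorem HasGradientAt.hasDerivAt_comp_add_smul {x v g : E} {t : ℝ}
    (h : HasGradientAt F g (x + t • v)) :
    HasDerivAt (fun s : ℝ => F (x + s • v)) ⟪g, v⟫ t := by
  have hline : HasDerivAt (fun s : ℝ => x + s • v) v t := by
    simpa using ((hasDerivAt_id t).smul_const v).const_add x
  simpa [InnerProductSpace.toDual_apply_apply, Function.comp_def] using
    h.hasFDerivAt.comp_hasDerivAt t hline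

theorem LipschitzWith.apply_add_le_of_hasGradientAt {K : NNReal} (hlip : LipschitzWith K gF)
    (hgrad : ∀ x, HasGradientAt F (gF x) x) (x v : E) :
    F (x + v) ≤ F x + ⟪gF x, v⟫ + K / 2 * ‖v‖ ^ 2 := by
  set ψ : ℝ → ℝ := fun t => F (x + t • v) - t * ⟪gF x, v⟫ - K / 2 * t ^ 2 * ‖v‖ ^ 2
  have hψ : ∀ t : ℝ, HasDerivAt ψ (⟪gF (x + t • v) - gF x, v⟫ - K * t * ‖v‖ ^ 2) t := by
    intro t
    have hquad := (((hasDerivAt_pow 2 t).const_mul ((K : ℝ) / 2)).mul_const (‖v‖ ^ 2))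
    refine ((((hgrad _).hasDerivAt_comp_add_smul).sub
      ((hasDerivAt_id t).mul_const ⟪gF x, v⟫)).sub hquad).congr_deriv ?_
    rw [inner_sub_left]
    simp only [Nat.cast_ofNat]
    ring
  have hanti : AntitoneOn ψ (Set.Icc 0 1) := by
    refine antitoneOn_of_hasDerivWithinAt_nonpos (convex_Icc 0 1)
      (fun t _ => (hψ t).continuousAt.continuousWithinAt)
      (fun t _ => (hψ t).hasDerivWithinAt) fun t ht => ?_
    rw [interior_Icc] at ht
    have hgap : ‖gF (x + t • v) - gF x‖ ≤ K * (t * ‖v‖) := by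
      simpa [norm_smul, abs_of_pos ht.1] using hlip.norm_sub_le (x + t • v) x
    calc ⟪gF (x + t • v) - gF x, v⟫ - K * t * ‖v‖ ^ 2
        ≤ ‖gF (x + t • v) - gF x‖ * ‖v‖ - K * t * ‖v‖ ^ 2 := by
          gcongr; exact real_inner_le_norm _ _
      _ ≤ K * (t * ‖v‖) * ‖v‖ - K * t * ‖v‖ ^ 2 := by gcongr
      _ = 0 := by ring
  have := hanti (Set.left_mem_Icc.2 zero_le_one) (Set.right_mem_Icc.2 zero_le_one) zero_le_one
  simp only [ψ, one_smul, zero_smul, add_zero] at this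
  linarith

theorem LipschitzWith.norm_sq_le_of_hasGradientAt {K : NNReal} (hK : 0 < K)
    (hlip : LipschitzWith K gF) (hgrad : ∀ x, HasGradientAt F (gF x) x) {m : ℝ}
    (hmin : ∀ y, m ≤ F y) (x : E) :
    ‖gF x‖ ^ 2 ≤ 2 * K * (F x - m) := by
  have hK' : (0 : ℝ) < K := hK
  have h := hlip.apply_add_le_of_hasGradientAt hgrad x (-((K : ℝ)⁻¹ • gF x))
  rw [inner_neg_right, real_inner_smul_right, real_inner_self_eq_norm_sq, norm_neg, norm_smul,
    norm_inv, Real.norm_eq_abs, abs_of_pos hK'] at h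
  have hdrop : ‖gF x‖ ^ 2 / (2 * K) ≤ F x - m := by
    have := hmin (x + -((K : ℝ)⁻¹ • gF x))
    have e : (K : ℝ)⁻¹ * ‖gF x‖ ^ 2 - K / 2 * ((K : ℝ)⁻¹ * ‖gF x‖) ^ 2
        = ‖gF x‖ ^ 2 / (2 * K) := by
      field_simp
      ring
    linarith
  rwa [div_le_iff₀ (by positivity), mul_comm] at hdrop

end Smooth

theorem norm_add_sq_le_two_mul {E : Type*} [SeminormedAddCommGroup E] (a b : E) :
    ‖a + b‖ ^ 2 ≤ 2 * (‖a‖ ^ 2 + ‖b‖ ^ 2) :=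
  (pow_le_pow_left₀ (norm_nonneg _) (norm_add_le a b) 2).trans add_sq_le

theorem stmt19_general {d n : ℕ} (μ L γ Fstar : ℝ)
    (hL : 0 < L) (hγ : 0 ≤ γ)
    (F : EuclideanSpace ℝ (Fin d) → ℝ)
    (gF : EuclideanSpace ℝ (Fin d) → EuclideanSpace ℝ (Fin d))
    (hgrad : ∀ x, HasGradientAt F (gF x) x)
    (hlipF : LipschitzWith (Real.toNNReal L) gF)
    (hPL : ∀ x, μ * (F x - Fstar) ≤ (1 / 2) * ‖gF x‖ ^ 2)
    (hmin : ∀ x, Fstar ≤ F x)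
    (x : ℕ → EuclideanSpace ℝ (Fin d))
    (R : EuclideanSpace ℝ (Fin d))
    (hxn : x n = x 0 - γ • ((n : ℝ) • gF (x 0) + R)) :
    F (x n) - Fstar
      ≤ (1 - 2 * (n : ℝ) * μ * γ + 2 * L ^ 2 * (n : ℝ) ^ 2 * γ ^ 2) * (F (x 0) - Fstar)
        - γ * ⟪gF (x 0), R⟫ + L * γ ^ 2 * ‖R‖ ^ 2 := by
  have hK : (L.toNNReal : ℝ) = L := Real.coe_toNNReal L hL.le
  have hdescent := hlipF.apply_add_le_of_hasGradientAt hgrad (x 0)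
    (-(γ • ((n : ℝ) • gF (x 0) + R)))
  rw [← sub_eq_add_neg, ← hxn, hK, inner_neg_right, real_inner_smul_right, inner_add_right,
    real_inner_smul_right, real_inner_self_eq_norm_sq, norm_neg, norm_smul, Real.norm_eq_abs,
    abs_of_nonneg hγ] at hdescent
  have hgrad_sq := hlipF.norm_sq_le_of_hasGradientAt (Real.toNNReal_pos.2 hL) hgrad hmin (x 0)
  rw [hK] at hgrad_sq
  have hsplit := norm_add_sq_le_two_mul ((n : ℝ) • gF (x 0)) R
  rw [norm_smul, Real.norm_natCast] at hsplit
  have hnγ : 0 ≤ (n : ℝ) * γ := by positivity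
  nlinarith [mul_le_mul_of_nonneg_left (hPL (x 0)) hnγ,
    mul_le_mul_of_nonneg_left hgrad_sq (by positivity : 0 ≤ L * ((n : ℝ) * γ) ^ 2),
    mul_le_mul_of_nonneg_left hsplit (by positivity : 0 ≤ L / 2 * γ ^ 2)]

/-- one full random-shuffle epoch under the Polyak–Łojasiewicz
condition satisfies
`F(x_n) - F* ≤ (1 - 2nμγ + 2L²n²γ²)(F(x_0) - F*) - γ⟨∇F(x_0), R⟩ + Lγ²‖R‖²`. -/
theorem stmt19 {d n : ℕ} (hn : 0 < n) (μ L G γ Fstar : ℝ)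
    (hμ : 0 < μ) (hL : 0 < L) (hG : 0 ≤ G) (hγ : 0 ≤ γ)
    (F : EuclideanSpace ℝ (Fin d) → ℝ)
    (gF : EuclideanSpace ℝ (Fin d) → EuclideanSpace ℝ (Fin d))
    (g : Fin n → EuclideanSpace ℝ (Fin d) → EuclideanSpace ℝ (Fin d))
    (hgrad : ∀ x, HasGradientAt F (gF x) x)
    (hlipF : LipschitzWith (Real.toNNReal L) gF)
    (havg : ∀ x, gF x = (n : ℝ)⁻¹ • ∑ i, g i x)
    (hLip : ∀ i x y, ‖g i x - g i y‖ ≤ L * ‖x - y‖)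
    (hbound : ∀ i x, ‖g i x‖ ≤ G)
    (hPL : ∀ x, μ * (F x - Fstar) ≤ (1 / 2) * ‖gF x‖ ^ 2)
    (hmin : ∀ x, Fstar ≤ F x)
    (σ : Equiv.Perm (Fin n))
    (x : ℕ → EuclideanSpace ℝ (Fin d))
    (hupd : ∀ k : Fin n, x ((k : ℕ) + 1) = x k - γ • g (σ k) (x k))
    (R : EuclideanSpace ℝ (Fin d))
    (hR : R = ∑ i : Fin n, (g (σ i) (x i) - g (σ i) (x 0)))
    (hxn : x n = x 0 - γ • ((n : ℝ) • gF (x 0) + R)) :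
    F (x n) - Fstar
      ≤ (1 - 2 * (n : ℝ) * μ * γ + 2 * L ^ 2 * (n : ℝ) ^ 2 * γ ^ 2) * (F (x 0) - Fstar)
        - γ * ⟪gF (x 0), R⟫ + L * γ ^ 2 * ‖R‖ ^ 2 :=
  stmt19_general μ L γ Fstar hL hγ F gF hgrad hlipF hPL hmin x R hxn
end
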